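/- arXiv:2509.16083 — 2 statements merged into one kernel-verified Lean document; each statement's English description precedes it below -/
import Mathlib

section
/- Let K be a matrix such that the spectral radius of A - B K is strictly less than 1. Then the block matrix φ_K = [[A, B], [-K A, -K B]] also has spectral radius strictly less than 1. -/
open Matrix

/-- Spectral radius of a real square matrix: the spectral radius of its
complexification, i.e. the sup of the norms of its (complex) eigenvalues. -/
noncomputable def specRad {N : Type*} [Fintype N] [DecidableEq N]
    (M : Matrix N N ℝ) : ENNReal :=
  spectralRadius ℂ (M.map (algebraMap ℝ ℂ))

/-- Spectrum of an upper block-triangular matrix with zero lower-right block. -/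
lemma spectrum_fromBlocks_subset {n m : ℕ}
    (X : Matrix (Fin n) (Fin n) ℂ) (Y : Matrix (Fin n) (Fin m) ℂ) :
    spectrum ℂ (Matrix.fromBlocks X Y (0 : Matrix (Fin m) (Fin n) ℂ) (0 : Matrix (Fin m) (Fin m) ℂ)) ⊆ spectrum ℂ X ∪ {0} := by
  intro μ hμ
  by_cases hμ0 : μ = 0
  · exact Or.inr hμ0
  refine Or.inl ?_
  rw [spectrum.mem_iff] at hμ ⊢
  contrapose! hμ
  rw [Matrix.isUnit_iff_isUnit_det] at hμ ⊢
  have hsub : algebraMap ℂ (Matrix (Fin n ⊕ Fin m) (Fin n ⊕ Fin m) ℂ) μ -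
      Matrix.fromBlocks X Y (0 : Matrix (Fin m) (Fin n) ℂ) (0 : Matrix (Fin m) (Fin m) ℂ) =
      Matrix.fromBlocks (algebraMap ℂ (Matrix (Fin n) (Fin n) ℂ) μ - X) (-Y) 0
        (μ • (1 : Matrix (Fin m) (Fin m) ℂ)) := by
    rw [Algebra.algebraMap_eq_smul_one, Algebra.algebraMap_eq_smul_one,
      ← Matrix.fromBlocks_one, Matrix.fromBlocks_smul, sub_eq_add_neg,
      Matrix.fromBlocks_neg, Matrix.fromBlocks_add]
    simp [sub_eq_add_neg]
  rw [hsub, Matrix.det_fromBlocks_zero₂₁]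
  refine (hμ.mul ?_)
  simp [Matrix.det_smul, hμ0]

theorem stmt0 {n m : ℕ} (A : Matrix (Fin n) (Fin n) ℝ)
    (B : Matrix (Fin n) (Fin m) ℝ) (K : Matrix (Fin m) (Fin n) ℝ)
    (h : specRad (A - B * K) < 1) :
    specRad (Matrix.fromBlocks A B (-(K * A)) (-(K * B))) < 1 := by
  classical
  set φ : Matrix (Fin n ⊕ Fin m) (Fin n ⊕ Fin m) ℝ :=
    Matrix.fromBlocks A B (-(K * A)) (-(K * B)) with hφ
  set T : Matrix (Fin n ⊕ Fin m) (Fin n ⊕ Fin m) ℝ :=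
    Matrix.fromBlocks 1 0 (-K) 1 with hT
  set T' : Matrix (Fin n ⊕ Fin m) (Fin n ⊕ Fin m) ℝ :=
    Matrix.fromBlocks 1 0 K 1 with hT'
  have hTT' : T * T' = 1 := by
    rw [hT, hT', Matrix.fromBlocks_multiply, ← Matrix.fromBlocks_one]
    congr 1 <;> simp
  have hT'T : T' * T = 1 := by
    rw [hT, hT', Matrix.fromBlocks_multiply, ← Matrix.fromBlocks_one]
    congr 1 <;> simp
  have hconj : T' * φ * T = Matrix.fromBlocks (A - B * K) B 0 0 := by
    rw [hT, hT', hφ, Matrix.fromBlocks_multiply, Matrix.fromBlocks_multiply]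
    congr 1 <;> simp [Matrix.mul_sub, Matrix.sub_mul, Matrix.mul_assoc,
      sub_eq_add_neg] <;> abel
  -- complexify
  let f : Matrix (Fin n ⊕ Fin m) (Fin n ⊕ Fin m) ℝ →+*
      Matrix (Fin n ⊕ Fin m) (Fin n ⊕ Fin m) ℂ := (algebraMap ℝ ℂ).mapMatrix
  have hfT : f T' * f T = 1 := by rw [← _root_.map_mul f, hT'T, _root_.map_one f]
  have hfT2 : f T * f T' = 1 := by rw [← _root_.map_mul f, hTT', _root_.map_one f]
  let u : (Matrix (Fin n ⊕ Fin m) (Fin n ⊕ Fin m) ℂ)ˣ := ⟨f T', f T, hfT, hfT2⟩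
  have hspec : spectrum ℂ (f φ) =
      spectrum ℂ (Matrix.fromBlocks ((A - B * K).map (algebraMap ℝ ℂ))
        (B.map (algebraMap ℝ ℂ)) (0 : Matrix (Fin m) (Fin n) ℂ) (0 : Matrix (Fin m) (Fin m) ℂ)) := by
    have h1 : f (T' * φ * T) = u.val * f φ * (u⁻¹).val := by
      rw [_root_.map_mul f, _root_.map_mul f, Units.inv_mk]
    have h2 : f (Matrix.fromBlocks (A - B * K) B 0 0) =
        Matrix.fromBlocks ((A - B * K).map (algebraMap ℝ ℂ)) (B.map (algebraMap ℝ ℂ))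
          (0 : Matrix (Fin m) (Fin n) ℂ) (0 : Matrix (Fin m) (Fin m) ℂ) := by
      show (Matrix.fromBlocks (A - B * K) B 0 0).map (algebraMap ℝ ℂ) = _
      rw [Matrix.fromBlocks_map]
      simp
    rw [← spectrum.units_conjugate (u := u) (a := f φ), ← h1, hconj, h2]
  -- now bound the spectral radius
  have hφmap : φ.map (algebraMap ℝ ℂ) = f φ := rfl
  rw [specRad, hφmap, spectralRadius, hspec]
  have hsub := spectrum_fromBlocks_subset ((A - B * K).map (algebraMap ℝ ℂ))
    (B.map (algebraMap ℝ ℂ))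
  calc (⨆ k ∈ spectrum ℂ (Matrix.fromBlocks ((A - B * K).map (algebraMap ℝ ℂ))
        (B.map (algebraMap ℝ ℂ)) (0 : Matrix (Fin m) (Fin n) ℂ) (0 : Matrix (Fin m) (Fin m) ℂ)), (‖k‖₊ : ENNReal))
      ≤ specRad (A - B * K) := by
        refine iSup₂_le fun k hk => ?_
        rcases hsub hk with hk' | hk'
        · exact le_iSup₂ (f := fun k (_ : k ∈ spectrum ℂ _) => (‖k‖₊ : ENNReal)) k hk'
        · simp only [Set.mem_singleton_iff] at hk'
          simp [hk']
    _ < 1 := h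
end

section
/- If the spectral radius of a real square matrix φ is strictly less than 1 and Q̄ is a symmetric positive definite matrix of the same size, then there exists a unique positive definite matrix Θ satisfying the discrete-time Lyapunov equation Θ = Q̄ + φᵀ Θ φ. -/
/-!
The solution is the series `Θ = ∑ₖ (φᵏ)ᵀ Q̄ φᵏ`. By Gelfand's formula `‖φᵏ‖ ≤ rᵏ` eventually for
some `r < 1`, so the series converges; splitting off its first term shows that it solves the
equation and that it is positive definite, as `Q̄` is and the remaining terms are positive
semidefinite. The difference `Δ` of two solutions satisfies `Δ = (φᵏ)ᵀ Δ φᵏ` for all `k`, and the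
right-hand side tends to `0`.
-/

open Matrix

open Filter Topology

theorem summable_norm_pow_of_spectralRadius_lt_one {A : Type*} [NormedRing A]
    [NormedAlgebra ℂ A] [CompleteSpace A] {a : A} (ha : spectralRadius ℂ a < 1) :
    Summable fun k : ℕ => ‖a ^ k‖ := by
  obtain ⟨r, hρr, hr1⟩ := exists_between ha
  have hroot : ∀ᶠ k : ℕ in atTop, ‖a ^ k‖ ^ (1 / k : ℝ) < r.toReal := by
    filter_upwards [(spectrum.pow_norm_pow_one_div_tendsto_nhds_spectralRadius a).eventually_lt_const
      hρr] with k hk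
    exact (ENNReal.ofReal_lt_iff_lt_toReal (by positivity) hr1.ne_top).mp hk
  refine .of_norm_bounded_eventually_nat (summable_geometric_of_lt_one ENNReal.toReal_nonneg
    (ENNReal.toReal_lt_of_lt_ofReal (by simpa using hr1))) ?_
  filter_upwards [hroot, eventually_ne_atTop 0] with k hk hk0
  rw [norm_norm, ← Real.rpow_inv_natCast_pow (norm_nonneg (a ^ k)) hk0, ← one_div]
  gcongr

namespace Matrix

variable {n : Type*} [Fintype n]

theorem isClosed_setOf_posSemidef : IsClosed {M : Matrix n n ℝ | M.PosSemidef} := by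
  simp only [posSemidef_iff_dotProduct_mulVec, Set.ofPred_and, Set.ofPred_forall]
  refine .inter (isClosed_eq continuous_id.matrix_conjTranspose continuous_id)
    (isClosed_iInter fun x => isClosed_le continuous_const ?_)
  exact continuous_const.dotProduct (continuous_id.matrix_mulVec continuous_const)

theorem posSemidef_tsum {T : ℕ → Matrix n n ℝ} (hT : ∀ k, (T k).PosSemidef) :
    (∑' k, T k).PosSemidef := by
  by_cases hs : Summable T
  · exact isClosed_setOf_posSemidef.mem_of_tendsto hs.hasSum.tendsto_sum_nat
      (.of_forall fun _ => posSemidef_sum _ fun k _ => hT k)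
  · simpa [tsum_eq_zero_of_not_summable hs] using PosSemidef.zero

variable [DecidableEq n]

section CommRing

variable {R : Type*} [CommRing R]

theorem transpose_pow_succ_mul_mul_pow_succ (φ Q : Matrix n n R) (k : ℕ) :
    (φ ^ (k + 1))ᵀ * Q * φ ^ (k + 1) = φᵀ * ((φ ^ k)ᵀ * Q * φ ^ k) * φ := by
  simp only [pow_succ, transpose_mul, Matrix.mul_assoc]

theorem eq_transpose_pow_mul_mul_pow {φ Δ : Matrix n n R} (hΔ : Δ = φᵀ * Δ * φ) (k : ℕ) :
    Δ = (φ ^ k)ᵀ * Δ * φ ^ k := by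
  induction k with
  | zero => simp
  | succ k ih => rw [transpose_pow_succ_mul_mul_pow_succ, ← ih, ← hΔ]

variable [TopologicalSpace R]

noncomputable def lyapunovSum (φ Q : Matrix n n R) : Matrix n n R :=
  ∑' k : ℕ, (φ ^ k)ᵀ * Q * φ ^ k

variable [IsTopologicalRing R] [T2Space R]

theorem lyapunovSum_eq_add {φ Q : Matrix n n R}
    (hs : Summable fun k : ℕ => (φ ^ k)ᵀ * Q * φ ^ k) :
    lyapunovSum φ Q = Q + φᵀ * lyapunovSum φ Q * φ := by
  calc lyapunovSum φ Q = Q + ∑' k : ℕ, φᵀ * ((φ ^ k)ᵀ * Q * φ ^ k) * φ := by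
        simp only [lyapunovSum, hs.tsum_eq_zero_add, pow_zero, transpose_one, Matrix.one_mul,
          Matrix.mul_one, transpose_pow_succ_mul_mul_pow_succ]
    _ = Q + φᵀ * lyapunovSum φ Q * φ := by
        rw [lyapunovSum, ← hs.tsum_mul_left, ← (hs.mul_left φᵀ).tsum_mul_right]

theorem eq_zero_of_eq_transpose_mul_mul {φ Δ : Matrix n n R}
    (hφ : Tendsto (φ ^ ·) atTop (𝓝 0)) (hΔ : Δ = φᵀ * Δ * φ) : Δ = 0 := by
  have h : Tendsto (fun k : ℕ => (φ ^ k)ᵀ * Δ * φ ^ k) atTop (𝓝 ((0 : Matrix n n R)ᵀ * Δ * 0)) :=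
    (((continuous_id.matrix_transpose.tendsto 0).comp hφ).mul tendsto_const_nhds).mul hφ
  rw [Matrix.mul_zero] at h
  exact tendsto_nhds_unique tendsto_const_nhds
    (h.congr fun k => (eq_transpose_pow_mul_mul_pow hΔ k).symm)

end CommRing

theorem posDef_lyapunovSum {φ Q : Matrix n n ℝ} (hs : Summable fun k : ℕ => (φ ^ k)ᵀ * Q * φ ^ k)
    (hQ : Q.PosDef) : (lyapunovSum φ Q).PosDef := by
  rw [lyapunovSum, hs.tsum_eq_zero_add]
  simp only [pow_zero, transpose_one, Matrix.one_mul, Matrix.mul_one]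
  exact hQ.add_posSemidef <| posSemidef_tsum fun k => by
    simpa using hQ.posSemidef.conjTranspose_mul_mul_same (φ ^ (k + 1))

section Frobenius

attribute [local instance] frobeniusNormedAddCommGroup frobeniusNormedSpace frobeniusNormedRing
  frobeniusNormedAlgebra

variable {φ : Matrix n n ℝ}

theorem summable_norm_pow_of_specRad_lt_one (hφ : specRad φ < 1) :
    Summable fun k : ℕ => ‖φ ^ k‖ := by
  convert summable_norm_pow_of_spectralRadius_lt_one hφ using 2 with k
  rw [← (algebraMap ℝ ℂ).mapMatrix_apply, ← map_pow, RingHom.mapMatrix_apply,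
    frobenius_norm_map_eq _ _ fun x => by simp]

theorem tendsto_pow_atTop_nhds_zero_of_specRad_lt_one (hφ : specRad φ < 1) :
    Tendsto (φ ^ ·) atTop (𝓝 0) :=
  tendsto_zero_iff_norm_tendsto_zero.mpr (summable_norm_pow_of_specRad_lt_one hφ).tendsto_atTop_zero

theorem summable_transpose_pow_mul_mul_pow_of_specRad_lt_one (hφ : specRad φ < 1)
    (Q : Matrix n n ℝ) : Summable fun k : ℕ => (φ ^ k)ᵀ * Q * φ ^ k := by
  have hsum := summable_norm_pow_of_specRad_lt_one hφ
  refine .of_norm_bounded_eventually_nat (hsum.mul_left ‖Q‖) ?_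
  filter_upwards [hsum.tendsto_atTop_zero.eventually_le_const one_pos] with k hk
  calc ‖(φ ^ k)ᵀ * Q * φ ^ k‖ ≤ ‖(φ ^ k)ᵀ‖ * ‖Q‖ * ‖φ ^ k‖ := norm_mul₃_le
    _ ≤ 1 * ‖Q‖ * ‖φ ^ k‖ := by rw [frobenius_norm_transpose]; gcongr
    _ = ‖Q‖ * ‖φ ^ k‖ := by rw [one_mul]

end Frobenius

end Matrix

theorem stmt2 {N : ℕ} (φ Qbar : Matrix (Fin N) (Fin N) ℝ)
    (hQ : Qbar.PosDef) (hφ : specRad φ < 1) :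
    ∃! Θ : Matrix (Fin N) (Fin N) ℝ, Θ.PosDef ∧ Θ = Qbar + φᵀ * Θ * φ := by
  have hs := summable_transpose_pow_mul_mul_pow_of_specRad_lt_one hφ Qbar
  refine ⟨lyapunovSum φ Qbar, ⟨posDef_lyapunovSum hs hQ, lyapunovSum_eq_add hs⟩, ?_⟩
  rintro Θ ⟨-, hΘ⟩
  refine sub_eq_zero.mp (eq_zero_of_eq_transpose_mul_mul
    (tendsto_pow_atTop_nhds_zero_of_specRad_lt_one hφ) ?_)
  calc Θ - lyapunovSum φ Qbar
      = (Qbar + φᵀ * Θ * φ) - (Qbar + φᵀ * lyapunovSum φ Qbar * φ) := by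
        rw [← hΘ, ← lyapunovSum_eq_add hs]
    _ = φᵀ * (Θ - lyapunovSum φ Qbar) * φ := by noncomm_ring
end
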